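/- arXiv:1012.5723 — 2 statements merged into one kernel-verified Lean document; each statement's English description precedes it below -/
import Mathlib

section
/- Let g : ℝ≥0 → [0,1] be non-increasing and suppose lim_{x→∞} g(x) x² (log x)² = a for a constant 0 < a < ∞. Define r_ρ = sqrt((log ρ + b)/(C ρ)) with C = ∫_{ℝ²} g(‖x‖)dx. Then lim_{ρ→∞} (log ρ + b)/C · ∫_{(1/2) r_ρ^{-1}}^∞ 2πx g(x) dx = 4πa/C. -/
open MeasureTheory Filter Real

/-!
Since `g x ~ a / (x log x)²`, the integrand `2π x g x` is `~ 2π a / (x (log x)²)`, whose integral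
over `(T, ∞)` is `2π a / log T`; hence `log T · ∫_T^∞ 2π x g x dx → 2π a`. For
`T = (1/2) r_ρ⁻¹` one has `log T = (y - log y) / 2 + O(1)` with `y = log ρ + b`, so
`(log ρ + b) / log T → 2`, and the limit is `2 · 2π a / C`.
-/

lemma hasDerivAt_neg_inv_log {x : ℝ} (hx : 1 < x) :
    HasDerivAt (fun y => -(log y)⁻¹) (x⁻¹ / log x ^ 2) x :=
  ((hasDerivAt_log (by positivity)).inv (log_pos hx).ne').neg.congr_deriv (by ring)

lemma integrableOn_and_integral_Ioi_inv_div_log_sq {T : ℝ} (hT : 1 < T) :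
    IntegrableOn (fun x => x⁻¹ / log x ^ 2) (Set.Ioi T) ∧
      ∫ x in Set.Ioi T, x⁻¹ / log x ^ 2 = (log T)⁻¹ := by
  have hderiv : ∀ x ∈ Set.Ici T, HasDerivAt (fun y => -(log y)⁻¹) (x⁻¹ / log x ^ 2) x :=
    fun x hx => hasDerivAt_neg_inv_log (hT.trans_le hx)
  have hpos : ∀ x ∈ Set.Ioi T, 0 ≤ x⁻¹ / log x ^ 2 := fun x hx => by
    have : 0 < x := by linarith [hx.out]
    positivity
  have hlim : Tendsto (fun y => -(log y)⁻¹) atTop (nhds (-0)) :=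
    tendsto_log_atTop.inv_tendsto_atTop.neg
  rw [neg_zero] at hlim
  refine ⟨integrableOn_Ioi_deriv_of_nonneg' hderiv hpos hlim, ?_⟩
  rw [integral_Ioi_of_hasDerivAt_of_nonneg' hderiv hpos hlim]
  ring

lemma abs_log_mul_integral_Ioi_sub_le {f : ℝ → ℝ} {a δ T : ℝ} (hT : 1 < T)
    (hf : AEStronglyMeasurable f (volume.restrict (Set.Ioi T)))
    (hbound : ∀ x > T, |f x * x * log x ^ 2 - a| ≤ δ) :
    |log T * (∫ x in Set.Ioi T, f x) - a| ≤ δ := by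
  obtain ⟨hq, hq_int⟩ := integrableOn_and_integral_Ioi_inv_div_log_sq hT
  have hdecomp : ∀ x > T, f x - a * (x⁻¹ / log x ^ 2)
      = (f x * x * log x ^ 2 - a) * (x⁻¹ / log x ^ 2) := fun x hx => by
    have : log x ≠ 0 := (log_pos (hT.trans hx)).ne'
    have : x ≠ 0 := by linarith
    field_simp
  have hnorm : ∀ x > T, ‖f x - a * (x⁻¹ / log x ^ 2)‖ ≤ δ * (x⁻¹ / log x ^ 2) := fun x hx => by
    have : 0 < x := by linarith
    rw [hdecomp x hx, norm_mul, Real.norm_eq_abs, Real.norm_of_nonneg (by positivity)]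
    gcongr
    exact hbound x hx
  have hdiff_int : IntegrableOn (fun x => f x - a * (x⁻¹ / log x ^ 2)) (Set.Ioi T) :=
    (hq.const_mul δ).mono' (hf.sub (hq.const_mul a).aestronglyMeasurable)
      ((ae_restrict_iff' measurableSet_Ioi).2 (.of_forall hnorm))
  have hf_int : IntegrableOn f (Set.Ioi T) := by
    refine (hdiff_int.add (hq.const_mul a)).congr_fun (fun x _ => ?_) measurableSet_Ioi
    simp
  have hint_le : |(∫ x in Set.Ioi T, f x) - a * (log T)⁻¹| ≤ δ * (log T)⁻¹ := by
    rw [← hq_int, ← integral_const_mul, ← integral_const_mul,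
      ← integral_sub hf_int (hq.const_mul a)]
    exact norm_integral_le_of_norm_le (hq.const_mul δ)
      ((ae_restrict_iff' measurableSet_Ioi).2 (.of_forall hnorm))
  have hlog : 0 < log T := log_pos hT
  calc |log T * (∫ x in Set.Ioi T, f x) - a|
      = log T * |(∫ x in Set.Ioi T, f x) - a * (log T)⁻¹| := by
        rw [← abs_of_pos hlog, ← abs_mul, abs_of_pos hlog]
        congr 1
        field_simp
    _ ≤ log T * (δ * (log T)⁻¹) := by gcongr
    _ = δ := by field_simp

theorem tendsto_log_mul_integral_Ioi {f : ℝ → ℝ} {a : ℝ}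
    (hf : ∀ᶠ T in atTop, AEStronglyMeasurable f (volume.restrict (Set.Ioi T)))
    (hlim : Tendsto (fun x => f x * x * log x ^ 2) atTop (nhds a)) :
    Tendsto (fun T => log T * ∫ x in Set.Ioi T, f x) atTop (nhds a) := by
  rw [Metric.tendsto_nhds]
  intro ε hε
  obtain ⟨M, hM⟩ := eventually_atTop.1 ((Metric.tendsto_nhds.1 hlim) (ε / 2) (half_pos hε))
  filter_upwards [hf, eventually_gt_atTop (max M 1)] with T hfT hT
  rw [max_lt_iff] at hT
  rw [Real.dist_eq]
  refine lt_of_le_of_lt (abs_log_mul_integral_Ioi_sub_le hT.2 hfT fun x hx => ?_) (half_lt_self hε)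
  exact (hM x (by linarith)).le

lemma tendsto_sub_log_div_two_add_div_self (c : ℝ) :
    Tendsto (fun y => ((y - log y) / 2 + c) / y) atTop (nhds (1 / 2)) := by
  have hlog : Tendsto (fun y : ℝ => log y / y) atTop (nhds 0) := by
    simpa using tendsto_pow_log_div_mul_add_atTop 1 0 1 one_ne_zero
  have hc : Tendsto (fun y : ℝ => c / y) atTop (nhds 0) := tendsto_const_nhds.div_atTop tendsto_id
  have := ((tendsto_const_nhds (x := (1 : ℝ))).sub hlog).div_const 2 |>.add hc
  rw [sub_zero, add_zero] at this
  refine this.congr' ?_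
  filter_upwards [eventually_ne_atTop 0] with y hy
  field_simp

/-- The point `(1/2) r_ρ⁻¹` where `r_ρ = √((log ρ + b) / (C ρ))`. -/
noncomputable def halfInvRadius (C b ρ : ℝ) : ℝ := (1 / 2) * (√((log ρ + b) / (C * ρ)))⁻¹

lemma log_halfInvRadius {C b ρ : ℝ} (hC : 0 < C) (hρ : 0 < ρ) (hy : 0 < log ρ + b) :
    log (halfInvRadius C b ρ)
      = ((log ρ + b) - log (log ρ + b)) / 2 + ((log C - b) / 2 - log 2) := by
  have hq : 0 < (log ρ + b) / (C * ρ) := by positivity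
  rw [halfInvRadius, log_mul (by norm_num) (inv_pos.2 (sqrt_pos.2 hq)).ne', log_inv,
    log_sqrt hq.le, log_div hy.ne' (by positivity), log_mul hC.ne' hρ.ne', one_div, log_inv]
  ring

lemma tendsto_log_halfInvRadius_div {C : ℝ} (hC : 0 < C) (b : ℝ) :
    Tendsto (fun ρ => log (halfInvRadius C b ρ) / (log ρ + b)) atTop (nhds (1 / 2)) := by
  have hy : Tendsto (fun ρ => log ρ + b) atTop atTop :=
    tendsto_atTop_add_const_right _ b tendsto_log_atTop
  refine ((tendsto_sub_log_div_two_add_div_self ((log C - b) / 2 - log 2)).comp hy).congr' ?_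
  filter_upwards [hy.eventually_gt_atTop 0, eventually_gt_atTop 0] with ρ hyρ hρ
  rw [Function.comp_apply, log_halfInvRadius hC hρ hyρ]

lemma tendsto_halfInvRadius_atTop {C : ℝ} (hC : 0 < C) (b : ℝ) :
    Tendsto (halfInvRadius C b) atTop atTop := by
  have hy : Tendsto (fun ρ => log ρ + b) atTop atTop :=
    tendsto_atTop_add_const_right _ b tendsto_log_atTop
  have hlog : Tendsto (fun ρ => log (halfInvRadius C b ρ)) atTop atTop := by
    refine (hy.atTop_mul_pos (by norm_num) (tendsto_log_halfInvRadius_div hC b)).congr' ?_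
    filter_upwards [hy.eventually_gt_atTop 0] with ρ hyρ
    field_simp
  refine (tendsto_exp_atTop.comp hlog).congr' ?_
  filter_upwards [hy.eventually_gt_atTop 0, eventually_gt_atTop 0] with ρ hyρ hρ
  exact exp_log (mul_pos one_half_pos (inv_pos.2 (sqrt_pos.2 (by positivity))))

theorem stmt_4_general (g : ℝ → ℝ) (C b a : ℝ)
    (hmono : AntitoneOn g (Set.Ici 0))
    (hCpos : 0 < C)
    (hlim : Tendsto (fun x : ℝ => g x * x ^ 2 * (Real.log x) ^ 2) atTop (nhds a)) :
    Tendsto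
      (fun ρ : ℝ =>
        (Real.log ρ + b) / C *
          ∫ x in Set.Ioi ((1 / 2) * (Real.sqrt ((Real.log ρ + b) / (C * ρ)))⁻¹),
            2 * π * x * g x)
      atTop (nhds (4 * π * a / C)) := by
  have hmeas : ∀ᶠ T in atTop,
      AEStronglyMeasurable (fun x => 2 * π * x * g x) (volume.restrict (Set.Ioi T)) := by
    filter_upwards [eventually_ge_atTop 0] with T hT
    have hg := aemeasurable_restrict_of_antitoneOn (μ := volume) measurableSet_Ioi
      (hmono.mono (Set.Ioi_subset_Ici hT))
    exact ((aemeasurable_id.const_mul (2 * π)).mul hg).aestronglyMeasurable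
  have htail := (tendsto_log_mul_integral_Ioi hmeas <|
    (hlim.const_mul (2 * π)).congr fun x => by ring).comp (tendsto_halfInvRadius_atTop hCpos b)
  have hratio := ((tendsto_log_halfInvRadius_div hCpos b).inv₀ (by norm_num)).div_const C
  have hlimit : (1 / 2)⁻¹ / C * (2 * π * a) = 4 * π * a / C := by ring
  rw [← hlimit]
  refine (hratio.mul htail).congr' ?_
  filter_upwards [(tendsto_log_atTop.comp (tendsto_halfInvRadius_atTop hCpos b)).eventually_gt_atTop 0]
    with ρ hρ
  change _ = (log ρ + b) / C * ∫ x in Set.Ioi (halfInvRadius C b ρ), 2 * π * x * g x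
  simp only [Function.comp_apply] at hρ ⊢
  field_simp

/-- Let `g : ℝ≥0 → [0,1]` be non-increasing with `lim_{x→∞} g(x) x² (log x)² = a`
for a constant `0 < a < ∞`. With `r_ρ = sqrt((log ρ + b)/(C ρ))` and
`C = ∫_{ℝ²} g(‖x‖) dx`, one has
`lim_{ρ→∞} (log ρ + b)/C · ∫_{(1/2) r_ρ^{-1}}^∞ 2πx g(x) dx = 4πa/C`. -/
theorem stmt_4 (g : ℝ → ℝ) (C b a : ℝ) (ha : 0 < a)
    (hg01 : ∀ x, 0 ≤ x → 0 ≤ g x ∧ g x ≤ 1)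
    (hmono : AntitoneOn g (Set.Ici 0))
    (hC : C = ∫ x : EuclideanSpace ℝ (Fin 2), g ‖x‖) (hCpos : 0 < C)
    (hlim : Tendsto (fun x : ℝ => g x * x ^ 2 * (Real.log x) ^ 2) atTop (nhds a)) :
    Tendsto
      (fun ρ : ℝ =>
        (Real.log ρ + b) / C *
          ∫ x in Set.Ioi ((1 / 2) * (Real.sqrt ((Real.log ρ + b) / (C * ρ)))⁻¹),
            2 * π * x * g x)
      atTop (nhds (4 * π * a / C)) :=
  stmt_4_general g C b a hmono hCpos hlim
end

section
/- Let g : ℝ≥0 → [0,1] be non-increasing with lim_{x→∞} g(x) x² (log x)² = 0, 0 < C = ∫_{ℝ²} g(‖x‖)dx < ∞, b ∈ ℝ, and r_ρ = sqrt((log ρ + b)/(Cρ)). Then lim_{ρ→∞} ρ · exp(-(log ρ + b)/C · ∫_{A_{1/r_ρ}} g(‖x‖) dx) = e^{-b}, where A_{1/r_ρ} = [-1/(2r_ρ), 1/(2r_ρ)]². -/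
/-!
Write `L = log ρ + b` and `R = 1 / (2 r_ρ)`. Since `log ρ - L = -b`, the quantity equals
`exp (-b + L / C * (C - ∫_{A_R} g ‖x‖))`, so it suffices that `L * (C - ∫_{A_R} g ‖x‖) → 0`.
The square `A_R` contains the disk of radius `R`, so `C - ∫_{A_R} g ‖x‖` lies between `0` and the
tail `T(R) = ∫_{‖x‖ ≥ R} g ‖x‖ = 2π ∫_R^∞ y g(y) dy`. Comparing `y g(y)` with `1 / (y (log y)²)`,
whose tail integral is `1 / log R`, gives `log R * T(R) → 0`, and `R ≥ ρ^{1/4}` eventually gives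
`L ≤ 8 log R`.
-/

open MeasureTheory Filter Real Set Topology

lemma hasDerivAt_neg_inv_log_s7 {y : ℝ} (hy : y ≠ 0) (hlog : log y ≠ 0) :
    HasDerivAt (fun t ↦ -(log t)⁻¹) (y * log y ^ 2)⁻¹ y :=
  ((hasDerivAt_log hy).inv hlog).neg.congr_deriv (by field_simp)

lemma tendsto_neg_inv_log_atTop : Tendsto (fun t ↦ -(log t)⁻¹) atTop (𝓝 0) := by
  simpa using tendsto_log_atTop.inv_tendsto_atTop.neg

lemma hasDerivAt_neg_inv_log_of_one_lt {y : ℝ} (hy : 1 < y) :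
    HasDerivAt (fun t ↦ -(log t)⁻¹) (y * log y ^ 2)⁻¹ y :=
  hasDerivAt_neg_inv_log_s7 (by positivity) (log_pos hy).ne'

lemma inv_mul_log_sq_nonneg {y : ℝ} (hy : 1 < y) : 0 ≤ (y * log y ^ 2)⁻¹ := by
  positivity

lemma integrableOn_Ioi_inv_mul_log_sq {a : ℝ} (ha : 1 < a) :
    IntegrableOn (fun y ↦ (y * log y ^ 2)⁻¹) (Ioi a) :=
  integrableOn_Ioi_deriv_of_nonneg (hasDerivAt_neg_inv_log_of_one_lt ha).continuousAt.continuousWithinAt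
    (fun _ hy ↦ hasDerivAt_neg_inv_log_of_one_lt (ha.trans hy))
    (fun _ hy ↦ inv_mul_log_sq_nonneg (ha.trans hy)) tendsto_neg_inv_log_atTop

lemma integral_Ioi_inv_mul_log_sq {a : ℝ} (ha : 1 < a) :
    ∫ y in Ioi a, (y * log y ^ 2)⁻¹ = (log a)⁻¹ := by
  rw [integral_Ioi_of_hasDerivAt_of_nonneg
    (hasDerivAt_neg_inv_log_of_one_lt ha).continuousAt.continuousWithinAt
    (fun _ hy ↦ hasDerivAt_neg_inv_log_of_one_lt (ha.trans hy))
    (fun _ hy ↦ inv_mul_log_sq_nonneg (ha.trans hy)) tendsto_neg_inv_log_atTop]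
  ring

lemma norm_integral_Ioi_mul_le {g : ℝ → ℝ} {R ε : ℝ} (hR : 1 < R)
    (hg : ∀ y, R < y → ‖g y * y ^ 2 * log y ^ 2‖ ≤ ε) :
    ‖∫ y in Ioi R, y * g y‖ ≤ ε * (log R)⁻¹ := by
  have hbound : ∀ y ∈ Ioi R, ‖y * g y‖ ≤ ε * (y * log y ^ 2)⁻¹ := by
    intro y hy
    have hy1 : 1 < y := hR.trans hy
    have hlogy : 0 < log y := log_pos hy1
    have hy0 : 0 < y := zero_lt_one.trans hy1
    rw [← div_eq_mul_inv, le_div_iff₀ (by positivity), ← Real.norm_of_nonneg (by positivity :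
      0 ≤ y * log y ^ 2), ← norm_mul, show y * g y * (y * log y ^ 2) = g y * y ^ 2 * log y ^ 2 by
      ring]
    exact hg y hy
  calc ‖∫ y in Ioi R, y * g y‖ ≤ ∫ y in Ioi R, ε * (y * log y ^ 2)⁻¹ :=
        norm_integral_le_of_norm_le ((integrableOn_Ioi_inv_mul_log_sq hR).const_mul _)
          ((ae_restrict_iff' measurableSet_Ioi).mpr (ae_of_all _ hbound))
    _ = ε * (log R)⁻¹ := by rw [integral_const_mul, integral_Ioi_inv_mul_log_sq hR]

lemma tendsto_log_mul_integral_Ioi_mul {g : ℝ → ℝ}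
    (hg : Tendsto (fun x ↦ g x * x ^ 2 * log x ^ 2) atTop (𝓝 0)) :
    Tendsto (fun R ↦ log R * ∫ y in Ioi R, y * g y) atTop (𝓝 0) := by
  rw [NormedAddGroup.tendsto_nhds_zero]
  intro ε hε
  obtain ⟨X, hX⟩ := eventually_atTop.mp
    (hg.norm.eventually (ge_mem_nhds (show ‖(0 : ℝ)‖ < ε / 2 by simpa using half_pos hε)))
  filter_upwards [eventually_ge_atTop X, eventually_gt_atTop 1] with R hRX hR1
  have hlogR : 0 < log R := log_pos hR1
  calc ‖log R * ∫ y in Ioi R, y * g y‖ = log R * ‖∫ y in Ioi R, y * g y‖ := by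
        rw [norm_mul, Real.norm_of_nonneg hlogR.le]
    _ ≤ log R * (ε / 2 * (log R)⁻¹) := by
        gcongr
        exact norm_integral_Ioi_mul_le hR1 fun y hy ↦ hX y (hRX.trans hy.le)
    _ < ε := by field_simp; linarith

lemma integral_fun_norm_euclideanSpace_two (f : ℝ → ℝ) :
    ∫ x : EuclideanSpace ℝ (Fin 2), f ‖x‖ = 2 * π * ∫ y in Ioi 0, y * f y := by
  have hball : volume.real (Metric.ball (0 : EuclideanSpace ℝ (Fin 2)) 1) = π := by
    rw [measureReal_def, EuclideanSpace.volume_ball]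
    norm_num [Real.Gamma_two, Real.sq_sqrt Real.pi_nonneg, ENNReal.toReal_ofReal Real.pi_nonneg]
  rw [integral_fun_norm_addHaar, finrank_euclideanSpace_fin, hball]
  simp only [nsmul_eq_mul, smul_eq_mul, pow_one, Nat.cast_ofNat, Nat.add_one_sub_one]
  ring

lemma setIntegral_le_norm_fun_norm_euclideanSpace_two (f : ℝ → ℝ) {R : ℝ} (hR : 0 < R) :
    ∫ x in {x : EuclideanSpace ℝ (Fin 2) | R ≤ ‖x‖}, f ‖x‖ = 2 * π * ∫ y in Ioi R, y * f y := by
  have hind : ∀ y, y * (Ici R).indicator f y = (Ici R).indicator (fun y ↦ y * f y) y := by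
    intro y
    simp [indicator_apply]
  rw [← integral_indicator (isClosed_le continuous_const continuous_norm).measurableSet]
  change ∫ x : EuclideanSpace ℝ (Fin 2), (Ici R).indicator f ‖x‖ = _
  rw [integral_fun_norm_euclideanSpace_two]
  simp only [hind]
  rw [setIntegral_indicator measurableSet_Ici, inter_eq_right.mpr (Ici_subset_Ioi.mpr hR),
    integral_Ici_eq_integral_Ioi]

lemma tendsto_log_mul_setIntegral_le_norm {g : ℝ → ℝ}
    (hg : Tendsto (fun x ↦ g x * x ^ 2 * log x ^ 2) atTop (𝓝 0)) :
    Tendsto (fun R ↦ log R * ∫ x in {x : EuclideanSpace ℝ (Fin 2) | R ≤ ‖x‖}, g ‖x‖)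
      atTop (𝓝 0) := by
  have h := (tendsto_log_mul_integral_Ioi_mul hg).const_mul (2 * π)
  rw [mul_zero] at h
  refine h.congr' ?_
  filter_upwards [eventually_gt_atTop 0] with R hR
  rw [setIntegral_le_norm_fun_norm_euclideanSpace_two g hR]
  ring

lemma compl_setOf_abs_apply_le_subset {ι : Type*} [Fintype ι] (r : ℝ) :
    {x : EuclideanSpace ℝ ι | ∀ i, |x i| ≤ r}ᶜ ⊆ {x | r ≤ ‖x‖} := by
  intro x hx
  simp only [mem_compl_iff, mem_ofPred_eq, not_forall, not_le] at hx ⊢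
  obtain ⟨i, hi⟩ := hx
  exact hi.le.trans (PiLp.norm_apply_le x i)

lemma measurableSet_setOf_abs_apply_le {ι : Type*} [Fintype ι] (r : ℝ) :
    MeasurableSet {x : EuclideanSpace ℝ ι | ∀ i, |x i| ≤ r} := by
  rw [ofPred_forall]
  exact (isClosed_iInter fun i ↦ isClosed_le (by fun_prop) continuous_const).measurableSet

lemma integral_sub_setIntegral_le {α : Type*} [MeasurableSpace α] {μ : Measure α} {f : α → ℝ}
    {s t : Set α} (hf : Integrable f μ) (hf0 : ∀ x, 0 ≤ f x) (hs : MeasurableSet s)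
    (hst : sᶜ ⊆ t) :
    ∫ x, f x ∂μ - ∫ x in s, f x ∂μ ≤ ∫ x in t, f x ∂μ := by
  rw [← integral_add_compl hs hf, add_sub_cancel_left]
  exact setIntegral_mono_set hf.integrableOn (ae_of_all _ fun x ↦ hf0 x) hst.eventuallyLE

lemma eventually_sqrt_sqrt_le_halfSide {C : ℝ} (hC : 0 < C) (b : ℝ) :
    ∀ᶠ ρ in atTop, √(√ρ) ≤ 1 / (2 * √((log ρ + b) / (C * ρ))) := by
  have hlo : (fun ρ ↦ log ρ + b) =o[atTop] fun ρ ↦ √ρ := by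
    refine (isLittleO_log_rpow_atTop one_half_pos).congr_right (fun ρ ↦ (sqrt_eq_rpow ρ).symm)
      |>.add (Asymptotics.isLittleO_const_left.2 (Or.inr ?_))
    exact tendsto_norm_atTop_atTop.comp tendsto_sqrt_atTop
  filter_upwards [hlo.bound (by positivity : 0 < C / 4), eventually_gt_atTop 0,
    (tendsto_atTop_add_const_right _ b tendsto_log_atTop).eventually_gt_atTop 0]
    with ρ hbound hρ hL
  rw [Real.norm_of_nonneg hL.le, Real.norm_of_nonneg (sqrt_nonneg ρ)] at hbound
  have hquot : √ρ * ((log ρ + b) / (C * ρ)) = (log ρ + b) / (C * √ρ) := by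
    field_simp
    rw [sq_sqrt hρ.le]
  rw [le_div_iff₀ (by positivity)]
  calc √(√ρ) * (2 * √((log ρ + b) / (C * ρ))) = 2 * √((log ρ + b) / (C * √ρ)) := by
        rw [← hquot, sqrt_mul (sqrt_nonneg _)]
        ring
    _ ≤ 2 * (1 / 2) := by
        gcongr
        rw [sqrt_le_iff, div_le_iff₀ (by positivity)]
        constructor <;> linarith
    _ = 1 := by norm_num

lemma tendsto_log_add_mul_comp_halfSide {C : ℝ} (hC : 0 < C) (b : ℝ) {S T : ℝ → ℝ}
    (hS0 : ∀ r, 0 ≤ S r) (hST : ∀ r, S r ≤ T r)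
    (hT : Tendsto (fun R ↦ log R * T R) atTop (𝓝 0)) :
    Tendsto (fun ρ ↦ (log ρ + b) * S (1 / (2 * √((log ρ + b) / (C * ρ))))) atTop (𝓝 0) := by
  set R : ℝ → ℝ := fun ρ ↦ 1 / (2 * √((log ρ + b) / (C * ρ)))
  have hle := eventually_sqrt_sqrt_le_halfSide hC b
  have hRtop : Tendsto R atTop atTop :=
    tendsto_atTop_mono' _ hle (tendsto_sqrt_atTop.comp tendsto_sqrt_atTop)
  have hlog : ∀ᶠ ρ in atTop, 0 ≤ log ρ + b ∧ log ρ + b ≤ 8 * log (R ρ) := by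
    filter_upwards [hle, eventually_gt_atTop 0, tendsto_log_atTop.eventually_ge_atTop |b|]
      with ρ hρR hρ hlogρ
    have hquarter : log ρ / 4 ≤ log (R ρ) := by
      calc log ρ / 4 = log √(√ρ) := by rw [log_sqrt (sqrt_nonneg ρ), log_sqrt hρ.le]; ring
        _ ≤ log (R ρ) := log_le_log (by positivity) hρR
    constructor <;> linarith [neg_abs_le b, le_abs_self b]
  have hupper := (hT.comp hRtop).const_mul 8
  rw [mul_zero] at hupper
  refine tendsto_of_tendsto_of_tendsto_of_le_of_le' tendsto_const_nhds hupper ?_ ?_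
  · filter_upwards [hlog] with ρ hρ
    exact mul_nonneg hρ.1 (hS0 _)
  · filter_upwards [hlog] with ρ hρ
    calc (log ρ + b) * S (R ρ) ≤ 8 * log (R ρ) * T (R ρ) :=
          mul_le_mul hρ.2 (hST _) (hS0 _) (by linarith)
      _ = 8 * (log (R ρ) * T (R ρ)) := mul_assoc _ _ _

theorem stmt_7_general (g : ℝ → ℝ) (C b : ℝ)
    (hg01 : ∀ x, 0 ≤ x → 0 ≤ g x ∧ g x ≤ 1)
    (hsmall : Tendsto (fun x : ℝ => g x * x ^ 2 * (Real.log x) ^ 2) atTop (nhds 0))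
    (hint : Integrable (fun x : EuclideanSpace ℝ (Fin 2) => g ‖x‖))
    (hC : C = ∫ x : EuclideanSpace ℝ (Fin 2), g ‖x‖) (hCpos : 0 < C) :
    Tendsto
      (fun ρ : ℝ =>
        ρ *
          Real.exp
            (-((Real.log ρ + b) / C *
                ∫ x in {x : EuclideanSpace ℝ (Fin 2) |
                    ∀ i, |x i| ≤ 1 / (2 * Real.sqrt ((Real.log ρ + b) / (C * ρ)))},
                  g ‖x‖)))
      atTop (nhds (Real.exp (-b))) := by
  set I : ℝ → ℝ := fun r ↦ ∫ x in {x : EuclideanSpace ℝ (Fin 2) | ∀ i, |x i| ≤ r}, g ‖x‖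
  have hg0 : ∀ x : EuclideanSpace ℝ (Fin 2), 0 ≤ g ‖x‖ := fun x ↦ (hg01 _ (norm_nonneg x)).1
  have hdefect := tendsto_log_add_mul_comp_halfSide hCpos b (S := fun r ↦ C - I r)
    (fun r ↦ sub_nonneg.2 (hC ▸ setIntegral_le_integral hint (ae_of_all _ hg0)))
    (fun r ↦ hC ▸ integral_sub_setIntegral_le hint hg0 (measurableSet_setOf_abs_apply_le r)
      (compl_setOf_abs_apply_le_subset r))
    (tendsto_log_mul_setIntegral_le_norm hsmall)
  have hlim := ((hdefect.div_const C).const_add (-b)).rexp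
  rw [zero_div, add_zero] at hlim
  refine hlim.congr' ?_
  filter_upwards [eventually_gt_atTop 0] with ρ hρ
  have hexponent : ∀ J, -b + (log ρ + b) * (C - J) / C = log ρ + -((log ρ + b) / C * J) := by
    intro J
    field_simp
    ring
  rw [hexponent, exp_add, exp_log hρ]

/-- Let `g : ℝ≥0 → [0,1]` be non-increasing with
`lim_{x→∞} g(x) x² (log x)² = 0`, `0 < C = ∫_{ℝ²} g(‖x‖) dx < ∞`, `b ∈ ℝ`, and
`r_ρ = sqrt((log ρ + b)/(Cρ))`.  Then
`lim_{ρ→∞} ρ · exp(-(log ρ + b)/C · ∫_{A_{1/r_ρ}} g(‖x‖) dx) = e^{-b}`, where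
`A_{1/r_ρ} = [-1/(2r_ρ), 1/(2r_ρ)]²`. -/
theorem stmt_7 (g : ℝ → ℝ) (C b : ℝ)
    (hg01 : ∀ x, 0 ≤ x → 0 ≤ g x ∧ g x ≤ 1)
    (hmono : AntitoneOn g (Set.Ici 0))
    (hsmall : Tendsto (fun x : ℝ => g x * x ^ 2 * (Real.log x) ^ 2) atTop (nhds 0))
    (hint : Integrable (fun x : EuclideanSpace ℝ (Fin 2) => g ‖x‖))
    (hC : C = ∫ x : EuclideanSpace ℝ (Fin 2), g ‖x‖) (hCpos : 0 < C) :
    Tendsto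
      (fun ρ : ℝ =>
        ρ *
          Real.exp
            (-((Real.log ρ + b) / C *
                ∫ x in {x : EuclideanSpace ℝ (Fin 2) |
                    ∀ i, |x i| ≤ 1 / (2 * Real.sqrt ((Real.log ρ + b) / (C * ρ)))},
                  g ‖x‖)))
      atTop (nhds (Real.exp (-b))) :=
  stmt_7_general g C b hg01 hsmall hint hC hCpos
end
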